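/- arXiv:2402.16435 — 4 statements merged into one kernel-verified Lean document; each statement's English description precedes it below -/
import Mathlib

section
/- Let p and p̃ be probability densities on ℝ such that sup_{f ∈ B₁(ℝ)} |∫f p − ∫f p̃| ≤ ε, where B₁(ℝ) is the set of measurable functions bounded by 1 in sup norm. Let ỹ₁,…,ỹ_K be i.i.d. from p̃, y ~ p independent, and A_K = |{i : ỹᵢ < y}|. Then for every n ∈ {0,…,K}, 1/(K+1) − ε ≤ P(A_K = n) ≤ 1/(K+1) + ε. -/
/-!
Conditionally on `y = X K`, the count `A_K` is binomial with parameters `K` and `F y`, where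
`F = cdf ν`; hence `P(A_K = n) = ∫ b (F y) dμ(y)` for the Bernstein polynomial
`b = C(K,n) t^n (1-t)^(K-n)`, which takes values in `[0, 1]`. As `ν` is atomless, `F` pushes `ν`
forward to the uniform law on `[0, 1]`, so the same integral against `ν` is the Beta integral
`∫₀¹ b = 1/(K+1)`. Testing the hypothesis on `b ∘ F` gives the bounds.
-/

open MeasureTheory ProbabilityTheory Set Filter
open scoped Nat

lemma integral_pow_mul_one_sub_pow (n m : ℕ) :
    ∫ t in (0:ℝ)..1, t ^ n * (1 - t) ^ m = (n ! * m ! : ℝ) / (n + m + 1)! := by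
  have hB : Complex.betaIntegral (n + 1) (m + 1) = (n ! * m ! : ℂ) / (n + m + 1)! := by
    have h := Complex.Gamma_mul_Gamma_eq_betaIntegral (s := n + 1) (t := m + 1)
      (by simp; positivity) (by simp; positivity)
    rw [show (n + 1 : ℂ) + (m + 1) = (n + m + 1 : ℕ) + 1 by push_cast; ring,
      Complex.Gamma_nat_eq_factorial, Complex.Gamma_nat_eq_factorial,
      Complex.Gamma_nat_eq_factorial] at h
    rw [eq_div_iff (by exact_mod_cast Nat.factorial_ne_zero _), h, mul_comm]
  have hI : Complex.betaIntegral (n + 1) (m + 1)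
      = ∫ t in (0:ℝ)..1, ((t ^ n * (1 - t) ^ m : ℝ) : ℂ) := by
    refine intervalIntegral.integral_congr fun t _ => ?_
    simp only [add_sub_cancel_right, Complex.cpow_natCast]
    push_cast; rfl
  rw [intervalIntegral.integral_ofReal, hB] at hI
  exact Complex.ofReal_injective (by rw [← hI]; push_cast; rfl)

namespace bernsteinPolynomial

lemma eval_nonneg (n ν : ℕ) {t : ℝ} (h0 : 0 ≤ t) (h1 : t ≤ 1) :
    0 ≤ (bernsteinPolynomial ℝ n ν).eval t := by
  have : 0 ≤ 1 - t := by linarith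
  simp only [bernsteinPolynomial, Polynomial.eval_mul, Polynomial.eval_pow, Polynomial.eval_sub,
    Polynomial.eval_one, Polynomial.eval_X, Polynomial.eval_natCast]
  positivity

lemma eval_le_one {n ν : ℕ} (hν : ν ≤ n) {t : ℝ} (h0 : 0 ≤ t) (h1 : t ≤ 1) :
    (bernsteinPolynomial ℝ n ν).eval t ≤ 1 := by
  have hsum := congrArg (Polynomial.eval t) (bernsteinPolynomial.sum ℝ n)
  rw [Polynomial.eval_finsetSum, Polynomial.eval_one] at hsum
  rw [← hsum]
  exact Finset.single_le_sum (fun k _ => eval_nonneg n k h0 h1)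
    (Finset.mem_range.2 (Nat.lt_succ_of_le hν))

lemma intervalIntegral_eval {n ν : ℕ} (hν : ν ≤ n) :
    ∫ t in (0:ℝ)..1, (bernsteinPolynomial ℝ n ν).eval t = 1 / (n + 1) := by
  simp only [bernsteinPolynomial, Polynomial.eval_mul, Polynomial.eval_pow, Polynomial.eval_sub,
    Polynomial.eval_one, Polynomial.eval_X, Polynomial.eval_natCast, mul_assoc,
    intervalIntegral.integral_const_mul, integral_pow_mul_one_sub_pow,
    Nat.add_sub_cancel' hν]
  rw [Nat.factorial_succ, ← Nat.choose_mul_factorial_mul_factorial hν]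
  have : (n.choose ν : ℝ) ≠ 0 := by exact_mod_cast (Nat.choose_pos hν).ne'
  push_cast
  field_simp

end bernsteinPolynomial

namespace ProbabilityTheory

section cdf

variable (ν : Measure ℝ) [IsProbabilityMeasure ν] [NullSingletonClass ν]

lemma continuous_cdf : Continuous (cdf ν) := by
  refine continuous_iff_continuousAt.2 fun x => ?_
  rw [(monotone_cdf ν).continuousAt_iff_leftLim_eq_rightLim, (cdf ν).rightLim_eq]
  have h : (cdf ν).measure {x} = 0 := by rw [measure_cdf]; exact measure_singleton x
  rw [StieltjesFunction.measure_singleton, ENNReal.ofReal_eq_zero] at h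
  linarith [(monotone_cdf ν).leftLim_le (le_refl x)]

lemma measure_cdf_preimage_Iic {t : ℝ} (ht0 : 0 ≤ t) (ht1 : t < 1) :
    ν (cdf ν ⁻¹' Iic t) = ENNReal.ofReal t := by
  set S := cdf ν ⁻¹' Iic t
  obtain ⟨x₁, hx₁⟩ : ∃ x, t < cdf ν x :=
    ((tendsto_cdf_atTop ν).eventually_const_lt ht1).exists
  rcases S.eq_empty_or_nonempty with hS | ⟨x₀, hx₀⟩
  · have : t ≤ 0 := ge_of_tendsto' (tendsto_cdf_atBot ν) fun x =>
      (not_le.1 fun hx => hS.subset (show x ∈ S from hx)).le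
    rw [hS, le_antisymm this ht0]
    simp
  have hbdd : BddAbove S := ⟨x₁, fun x hx => not_lt.1 fun h =>
    (lt_of_le_of_lt hx hx₁).not_ge (monotone_cdf ν h.le)⟩
  have hmem : sSup S ∈ S :=
    (isClosed_Iic.preimage (continuous_cdf ν)).csSup_mem ⟨x₀, hx₀⟩ hbdd
  have hS_eq : S = Iic (sSup S) :=
    Subset.antisymm (fun x hx => le_csSup hbdd hx) fun x hx => (monotone_cdf ν hx).trans hmem
  obtain ⟨b, hb⟩ : t ∈ range (cdf ν) :=
    mem_range_of_exists_le_of_exists_ge (continuous_cdf ν) ⟨x₀, hx₀⟩ ⟨x₁, hx₁.le⟩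
  have hcdf : cdf ν (sSup S) = t :=
    le_antisymm hmem (hb ▸ monotone_cdf ν (le_csSup hbdd (show b ∈ S from hb.le)))
  rw [hS_eq, ← ofReal_cdf, hcdf]

lemma map_cdf : ν.map (cdf ν) = volume.restrict (Icc 0 1) := by
  have hF := (monotone_cdf ν).measurable
  have : IsProbabilityMeasure (ν.map (cdf ν)) := Measure.isProbabilityMeasure_map hF.aemeasurable
  have : IsProbabilityMeasure (volume.restrict (Icc (0:ℝ) 1)) := ⟨by simp⟩
  refine Measure.ext_of_Iic _ _ fun t => ?_
  rw [Measure.map_apply hF measurableSet_Iic, Measure.restrict_apply measurableSet_Iic]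
  rcases lt_or_ge t 0 with ht0 | ht0
  · have : cdf ν ⁻¹' Iic t = ∅ :=
      eq_empty_of_forall_notMem fun x hx => (ht0.trans_le (cdf_nonneg ν x)).not_ge hx
    have h' : Iic t ∩ Icc 0 1 = ∅ := by
      ext; simp only [mem_inter_iff, mem_Iic, mem_Icc, mem_empty_iff_false]; grind
    rw [this, h', measure_empty, measure_empty]
  rcases lt_or_ge t 1 with ht1 | ht1
  · have h' : Iic t ∩ Icc 0 1 = Icc 0 t := by
      ext; simp only [mem_inter_iff, mem_Iic, mem_Icc]; grind
    rw [measure_cdf_preimage_Iic ν ht0 ht1, h', Real.volume_Icc, sub_zero]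
  · have : cdf ν ⁻¹' Iic t = univ := eq_univ_of_forall fun x => (cdf_le_one ν x).trans ht1
    have h' : Iic t ∩ Icc 0 1 = Icc 0 1 := inter_eq_right.2 fun x hx => hx.2.trans ht1
    rw [this, h', measure_univ, Real.volume_Icc, sub_zero, ENNReal.ofReal_one]

lemma integral_bernstein_cdf {K n : ℕ} (hn : n ≤ K) :
    ∫ y, (bernsteinPolynomial ℝ K n).eval (cdf ν y) ∂ν = 1 / (K + 1) := by
  rw [← integral_map (monotone_cdf ν).measurable.aemeasurable
      (Polynomial.continuous _).aestronglyMeasurable, map_cdf, integral_Icc_eq_integral_Ioc,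
    ← intervalIntegral.integral_of_le zero_le_one, bernsteinPolynomial.intervalIntegral_eval hn]

end cdf

end ProbabilityTheory

lemma MeasureTheory.Measure.pi_card_filter_eq {ι α : Type*} [Fintype ι] [MeasurableSpace α]
    (ν : Measure α) [SigmaFinite ν] (p : α → Prop) [DecidablePred p]
    (hp : MeasurableSet {x | p x}) (n : ℕ) :
    Measure.pi (fun _ : ι => ν) {w | (Finset.univ.filter fun i => p (w i)).card = n}
      = (Fintype.card ι).choose n * ν {x | p x} ^ n
          * ν {x | ¬ p x} ^ (Fintype.card ι - n) := by
  classical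
  set g : (ι → α) → Finset ι := fun w => Finset.univ.filter fun i => p (w i)
  have hfiber (T : Finset ι) :
      g ⁻¹' {T} = univ.pi fun i => if i ∈ T then {x | p x} else {x | ¬ p x} := by
    ext w
    simp only [g, mem_preimage, mem_singleton_iff, Finset.ext_iff, Finset.mem_filter,
      Finset.mem_univ, true_and, mem_univ_pi]
    refine forall_congr' fun i => ?_
    split_ifs with hi <;> simp [hi]
  have hunion : {w | (g w).card = n} = ⋃ T ∈ Finset.univ.powersetCard n, g ⁻¹' {T} := by
    ext w; simp
  have hT (T : Finset ι) (hTmem : T ∈ Finset.univ.powersetCard n) :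
      Measure.pi (fun _ : ι => ν) (g ⁻¹' {T})
        = ν {x | p x} ^ n * ν {x | ¬ p x} ^ (Fintype.card ι - n) := by
    rw [Finset.mem_powersetCard] at hTmem
    have hcompl : (Finset.univ.filter fun i => i ∉ T).card = Fintype.card ι - n := by
      rw [Finset.filter_not, Finset.filter_mem_eq_inter, Finset.univ_inter,
        Finset.card_sdiff_of_subset hTmem.1, hTmem.2, Finset.card_univ]
    simp_rw [hfiber, Measure.pi_pi, apply_ite ν]
    rw [Finset.prod_ite, Finset.prod_const, Finset.prod_const, Finset.filter_mem_eq_inter,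
      Finset.univ_inter, hTmem.2, hcompl]
  have hmeas (T : Finset ι) : MeasurableSet (g ⁻¹' {T}) := by
    rw [hfiber]
    exact .univ_pi fun i => by split_ifs; exacts [hp, hp.compl]
  rw [hunion, measure_biUnion_finset
      (fun S _ T _ hST => (Set.disjoint_singleton.2 hST).preimage g) fun T _ => hmeas T,
    Finset.sum_congr rfl hT, Finset.sum_const, Finset.card_powersetCard, Finset.card_univ,
    nsmul_eq_mul, mul_assoc]

lemma MeasureTheory.Measure.pi_card_filter_lt_eq_bernstein_cdf (ν : Measure ℝ)
    [IsProbabilityMeasure ν] [NullSingletonClass ν] (K n : ℕ) (y : ℝ) :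
    Measure.pi (fun _ : Fin K => ν) {w | (Finset.univ.filter fun i => w i < y).card = n}
      = ENNReal.ofReal ((bernsteinPolynomial ℝ K n).eval (cdf ν y)) := by
  have hlt : ν {x | x < y} = ENNReal.ofReal (cdf ν y) := by
    rw [ofReal_cdf]; exact measure_congr Iio_ae_eq_Iic
  have hge : ν {x | ¬ x < y} = ENNReal.ofReal (1 - cdf ν y) := by
    change ν (Iio y)ᶜ = _
    rw [measure_compl measurableSet_Iio (measure_ne_top ν _), measure_univ,
      show ν (Iio y) = _ from hlt, ENNReal.ofReal_sub 1 (cdf_nonneg ν y), ENNReal.ofReal_one]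
  have h1 : 0 ≤ 1 - cdf ν y := sub_nonneg.2 (cdf_le_one ν y)
  rw [Measure.pi_card_filter_eq ν (· < y) measurableSet_Iio, hlt, hge, Fintype.card_fin]
  simp only [bernsteinPolynomial, Polynomial.eval_mul, Polynomial.eval_pow, Polynomial.eval_sub,
    Polynomial.eval_one, Polynomial.eval_X, Polynomial.eval_natCast]
  rw [ENNReal.ofReal_mul (mul_nonneg (Nat.cast_nonneg _) (pow_nonneg (cdf_nonneg ν y) n)),
    ENNReal.ofReal_mul (Nat.cast_nonneg _),
    ENNReal.ofReal_pow (cdf_nonneg ν y), ENNReal.ofReal_pow h1, ENNReal.ofReal_natCast]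

lemma ProbabilityTheory.iIndepFun.map_last_init_eq_prod {Ω β : Type*} [MeasurableSpace Ω]
    [MeasurableSpace β] {P : Measure Ω} {K : ℕ} {X : Fin (K + 1) → Ω → β}
    (hX : ∀ i, Measurable (X i)) (h : iIndepFun X P) :
    P.map (fun ω => (X (Fin.last K) ω, fun i : Fin K => X i.castSucc ω))
      = (P.map (X (Fin.last K))).prod (Measure.pi fun i : Fin K => P.map (X i.castSucc)) := by
  have := h.isProbabilityMeasure
  have hmp := measurePreserving_piFinSuccAbove (fun i => P.map (X i)) (Fin.last K)
  have hcomp : (fun ω => (X (Fin.last K) ω, fun i : Fin K => X i.castSucc ω))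
      = MeasurableEquiv.piFinSuccAbove (fun _ => β) (Fin.last K) ∘ fun ω i => X i ω := by
    ext ω <;> simp [MeasurableEquiv.piFinSuccAbove, Fin.init]
  rw [hcomp, ← Measure.map_map (MeasurableEquiv.measurable _) (measurable_pi_lambda _ hX),
    h.map_fun_eq_pi_map fun i => (hX i).aemeasurable, hmp.map_eq]
  simp only [Fin.succAbove_last]

lemma measure_card_lt_last_eq_lintegral {Ω : Type*} [MeasurableSpace Ω] {P : Measure Ω}
    {μ ν : Measure ℝ} [SigmaFinite ν] {K : ℕ}
    {X : Fin (K + 1) → Ω → ℝ} (hmeas : ∀ i, Measurable (X i)) (hindep : iIndepFun X P)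
    (hlawν : ∀ i : Fin K, P.map (X i.castSucc) = ν) (hlawμ : P.map (X (Fin.last K)) = μ)
    (n : ℕ) :
    P {ω | (Finset.univ.filter fun i : Fin K => X i.castSucc ω < X (Fin.last K) ω).card = n}
      = ∫⁻ y, Measure.pi (fun _ : Fin K => ν)
          {w | (Finset.univ.filter fun i => w i < y).card = n} ∂μ := by
  set B := {q : ℝ × (Fin K → ℝ) | (Finset.univ.filter fun i => q.2 i < q.1).card = n}
  have hB : MeasurableSet B := by
    have : Measurable fun q : ℝ × (Fin K → ℝ) =>
        (Finset.univ.filter fun i => q.2 i < q.1).card := by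
      simp_rw [Finset.card_filter]
      exact Finset.measurable_sum _ fun i _ => Measurable.ite
        (measurableSet_lt measurable_snd.eval measurable_fst) measurable_const measurable_const
    exact this (measurableSet_singleton n)
  have hmap : Measurable fun ω => (X (Fin.last K) ω, fun i : Fin K => X i.castSucc ω) :=
    (hmeas _).prodMk (measurable_pi_lambda _ fun i => hmeas _)
  change P ((fun ω => (X (Fin.last K) ω, fun i : Fin K => X i.castSucc ω)) ⁻¹' B) = _
  rw [← Measure.map_apply hmap hB, hindep.map_last_init_eq_prod hmeas, hlawμ, funext hlawν,
    Measure.prod_apply hB]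
  rfl

theorem rank_statistic_approx_uniform_general
    {Ω : Type*} [MeasurableSpace Ω] (P : Measure Ω)
    (μ ν : Measure ℝ) [IsProbabilityMeasure ν]
    [NullSingletonClass ν] (ε : ℝ)
    (hε : ∀ f : ℝ → ℝ, Measurable f → (∀ x, |f x| ≤ 1) →
      |∫ x, f x ∂μ - ∫ x, f x ∂ν| ≤ ε)
    (K : ℕ) (X : Fin (K + 1) → Ω → ℝ)
    (hmeas : ∀ i, Measurable (X i))
    (hindep : iIndepFun X P)
    (hlawν : ∀ i : Fin K, Measure.map (X i.castSucc) P = ν)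
    (hlawμ : Measure.map (X (Fin.last K)) P = μ) :
    ∀ n : ℕ, n ≤ K →
      1 / (K + 1) - ε ≤
        (P {ω | (Finset.univ.filter
            (fun i : Fin K => X i.castSucc ω < X (Fin.last K) ω)).card = n}).toReal ∧
      (P {ω | (Finset.univ.filter
            (fun i : Fin K => X i.castSucc ω < X (Fin.last K) ω)).card = n}).toReal
          ≤ 1 / (K + 1) + ε := by
  intro n hn
  set g : ℝ → ℝ := fun y => (bernsteinPolynomial ℝ K n).eval (cdf ν y)
  have hg : Measurable g := (Polynomial.continuous _).measurable.comp (monotone_cdf ν).measurable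
  have hg0 (y : ℝ) : 0 ≤ g y :=
    bernsteinPolynomial.eval_nonneg K n (cdf_nonneg ν y) (cdf_le_one ν y)
  have hg1 (y : ℝ) : g y ≤ 1 :=
    bernsteinPolynomial.eval_le_one hn (cdf_nonneg ν y) (cdf_le_one ν y)
  have hclose := abs_le.1 (hε g hg fun y => abs_le.2 ⟨by linarith [hg0 y], hg1 y⟩)
  rw [integral_bernstein_cdf ν hn,
    integral_eq_lintegral_of_nonneg_ae (.of_forall hg0) hg.aestronglyMeasurable] at hclose
  simp_rw [measure_card_lt_last_eq_lintegral hmeas hindep hlawν hlawμ n,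
    Measure.pi_card_filter_lt_eq_bernstein_cdf]
  exact ⟨by linarith, by linarith⟩

/-- **Approximate uniformity of the rank statistic.** Let `μ` (law of the data, with density `p`)
and `ν` (law of the model, with density `p̃`) be atomless probability measures on `ℝ` such that
`|∫ f dμ - ∫ f dν| ≤ ε` for every measurable `f` bounded by `1`.  If `X 0, …, X (K-1)` are i.i.d.
with law `ν`, `X K` is an independent sample with law `μ`, and
`A_K = |{i < K : X i < X K}|`, then `1/(K+1) - ε ≤ P(A_K = n) ≤ 1/(K+1) + ε`
for every `n ∈ {0, …, K}`. -/
theorem rank_statistic_approx_uniform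
    {Ω : Type*} [MeasurableSpace Ω] (P : Measure Ω) [IsProbabilityMeasure P]
    (μ ν : Measure ℝ) [IsProbabilityMeasure μ] [IsProbabilityMeasure ν]
    [NullSingletonClass μ] [NullSingletonClass ν] (ε : ℝ)
    (hε : ∀ f : ℝ → ℝ, Measurable f → (∀ x, |f x| ≤ 1) →
      |∫ x, f x ∂μ - ∫ x, f x ∂ν| ≤ ε)
    (K : ℕ) (X : Fin (K + 1) → Ω → ℝ)
    (hmeas : ∀ i, Measurable (X i))
    (hindep : iIndepFun X P)
    (hlawν : ∀ i : Fin K, Measure.map (X i.castSucc) P = ν)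
    (hlawμ : Measure.map (X (Fin.last K)) P = μ) :
    ∀ n : ℕ, n ≤ K →
      1 / (K + 1) - ε ≤
        (P {ω | (Finset.univ.filter
            (fun i : Fin K => X i.castSucc ω < X (Fin.last K) ω)).card = n}).toReal ∧
      (P {ω | (Finset.univ.filter
            (fun i : Fin K => X i.castSucc ω < X (Fin.last K) ω)).card = n}).toReal
          ≤ 1 / (K + 1) + ε :=
  rank_statistic_approx_uniform_general P μ ν ε hε K X hmeas hindep hlawν hlawμ
end

section
/- Let p and p̃ be densities on ℝ with cdfs F and F̃, F̃ continuous. If the rank statistic A_K (the number of the K i.i.d. samples from p̃ below an independent sample y from p) is uniform on {0,…,K}, then ∫ F̃(y)ⁿ p(y) dy = 1/(n+1) for all n ∈ {0,1,…,K}. -/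
open MeasureTheory ProbabilityTheory Set
open scoped ENNReal

/-! Fix `n` of the `K` samples. By independence, the probability that all of them lie
below the last sample `y` is `∫ ν (Iio y) ^ n dμ(y)`, and continuity of `F̃ = cdf ν` turns
`ν (Iio y)` into `F̃(y)`. Summing over the `C(K, n)` choices counts every outcome `C(A_K, n)`
times, so `C(K, n) ∫ F̃ⁿ dμ = E[C(A_K, n)]`. When `A_K` is uniform on `{0, …, K}`, the
hockey-stick identity gives `E[C(A_K, n)] = C(K+1, n+1) / (K+1) = C(K, n) / (n+1)`. -/

lemma measure_Iio_eq_ofReal_cdf {ν : Measure ℝ} [IsProbabilityMeasure ν]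
    (hcont : Continuous (cdf ν)) (y : ℝ) : ν (Iio y) = ENNReal.ofReal (cdf ν y) := by
  have h := (cdf ν).measure_Iio (tendsto_cdf_atBot ν) y
  rwa [measure_cdf, sub_zero, hcont.continuousAt.continuousWithinAt.leftLim_eq] at h

lemma integral_cdf_pow_eq_toReal_lintegral {ν : Measure ℝ} [IsProbabilityMeasure ν]
    (hcont : Continuous (cdf ν)) (μ : Measure ℝ) (n : ℕ) :
    ∫ y, cdf ν y ^ n ∂μ = (∫⁻ y, ν (Iio y) ^ n ∂μ).toReal := by
  rw [integral_eq_lintegral_of_nonneg_ae (.of_forall fun y => pow_nonneg (cdf_nonneg ν y) n)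
    ((monotone_cdf ν).measurable.pow_const n).aestronglyMeasurable]
  congr 1
  refine lintegral_congr fun y => ?_
  rw [ENNReal.ofReal_pow (cdf_nonneg ν y), measure_Iio_eq_ofReal_cdf hcont]

section Independence

variable {Ω : Type*} [MeasurableSpace Ω] {P : Measure Ω}

lemma ProbabilityTheory.IndepFun.measure_prodMk_mem_eq_lintegral {β γ : Type*}
    [MeasurableSpace β] [MeasurableSpace γ] [IsFiniteMeasure P] {V : Ω → β} {Y : Ω → γ}
    (hV : Measurable V) (hY : Measurable Y) (h : IndepFun V Y P) {E : Set (β × γ)}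
    (hE : MeasurableSet E) :
    P {ω | (V ω, Y ω) ∈ E} = ∫⁻ y, P {ω | (V ω, y) ∈ E} ∂(P.map Y) := by
  change P ((fun ω => (V ω, Y ω)) ⁻¹' E) = _
  rw [← Measure.map_apply (hV.prodMk hY) hE,
    h.map_prod_eq_prod_map_map hV.aemeasurable hY.aemeasurable, Measure.prod_apply_symm hE]
  refine lintegral_congr fun y => ?_
  rw [Measure.map_apply hV (measurable_prodMk_right hE)]
  rfl

lemma ProbabilityTheory.iIndepFun.measure_forall_lt_eq_lintegral_pow {ι : Type*}
    [IsFiniteMeasure P] {X : ι → Ω → ℝ} (hmeas : ∀ i, Measurable (X i))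
    (hindep : iIndepFun X P) {S : Finset ι} {j : ι} (hj : j ∉ S) {ν : Measure ℝ}
    (hlaw : ∀ i ∈ S, P.map (X i) = ν) :
    P {ω | ∀ i ∈ S, X i ω < X j ω} = ∫⁻ y, ν (Iio y) ^ S.card ∂(P.map (X j)) := by
  classical
  have hVY : IndepFun (fun ω (i : S) => X i ω) (X j) P := by
    exact (hindep.indepFun_finset S {j} (Finset.disjoint_singleton_right.2 hj) hmeas).comp
      measurable_id (measurable_pi_apply ⟨j, Finset.mem_singleton_self j⟩)
  have hE : MeasurableSet {p : (S → ℝ) × ℝ | ∀ i, p.1 i < p.2} := by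
    simp only [ofPred_forall]
    exact .iInter fun i =>
      measurableSet_lt ((measurable_pi_apply i).comp measurable_fst) measurable_snd
  have key := hVY.measure_prodMk_mem_eq_lintegral
    (measurable_pi_lambda (fun ω (i : S) => X i ω) fun i => hmeas i) (hmeas j) hE
  simp only [mem_ofPred_eq, Subtype.forall] at key
  rw [key]
  refine lintegral_congr fun y => ?_
  have hinter : {ω | ∀ i ∈ S, X i ω < y} = ⋂ i ∈ S, X i ⁻¹' Iio y := by ext; simp
  rw [hinter, hindep.measure_inter_preimage_eq_mul S fun _ _ => measurableSet_Iio,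
    Finset.prod_congr rfl fun i hi => ?_, Finset.prod_const]
  rw [← Measure.map_apply (hmeas i) measurableSet_Iio, hlaw i hi]

end Independence

lemma sum_indicator_subset_eq_choose_card {Ω ι : Type*} [Fintype ι] (T : Ω → Finset ι)
    (n : ℕ) (ω : Ω) :
    ∑ S ∈ Finset.powersetCard n Finset.univ, {ω | S ⊆ T ω}.indicator 1 ω
      = ((T ω).card.choose n : ℝ≥0∞) := by
  classical
  have hfilter : (Finset.powersetCard n Finset.univ).filter (· ⊆ T ω)
      = Finset.powersetCard n (T ω) := by
    ext S
    simp only [Finset.mem_filter, Finset.mem_powersetCard, Finset.subset_univ, true_and]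
    tauto
  simp only [indicator_apply, mem_ofPred_eq, Pi.one_apply]
  rw [Finset.sum_boole, hfilter, Finset.card_powersetCard]

section Counting

variable {Ω : Type*} [MeasurableSpace Ω] {P : Measure Ω}

lemma lintegral_choose_card_eq_sum_measure {ι : Type*} [Fintype ι] {T : Ω → Finset ι}
    (hT : ∀ S, MeasurableSet {ω | S ⊆ T ω}) (n : ℕ) :
    ∫⁻ ω, ((T ω).card.choose n : ℝ≥0∞) ∂P
      = ∑ S ∈ Finset.powersetCard n Finset.univ, P {ω | S ⊆ T ω} := by
  simp_rw [← sum_indicator_subset_eq_choose_card,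
    lintegral_finsetSum _ fun S _ => measurable_one.indicator (hT S),
    lintegral_indicator_one (hT _)]

lemma lintegral_comp_eq_sum_of_le {A : Ω → ℕ} (hA : Measurable A) {K : ℕ}
    (hAK : ∀ ω, A ω ≤ K) (f : ℕ → ℝ≥0∞) :
    ∫⁻ ω, f (A ω) ∂P = ∑ j ∈ Finset.range (K + 1), f j * P {ω | A ω = j} := by
  have hlaw : ∀ j, P.map A {j} = P {ω | A ω = j} := fun j =>
    Measure.map_apply hA (measurableSet_singleton j)
  have hnull : ∀ j ∉ Finset.range (K + 1), f j * P.map A {j} = 0 := fun j hj => by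
    have hempty : {ω | A ω = j} = ∅ := eq_empty_of_forall_notMem fun ω (h : A ω = j) =>
      hj (Finset.mem_range.2 (h ▸ Nat.lt_succ_of_le (hAK ω)))
    rw [hlaw, hempty, measure_empty, mul_zero]
  rw [← lintegral_map (measurable_from_nat (f := f)) hA, lintegral_countable',
    tsum_eq_sum hnull]
  simp_rw [hlaw]

end Counting

lemma Nat.sum_range_choose_eq_choose_succ (K n : ℕ) :
    ∑ j ∈ Finset.range (K + 1), j.choose n = (K + 1).choose (n + 1) := by
  induction K with
  | zero => rcases n with _ | n <;> simp [Nat.choose_eq_zero_of_lt]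
  | succ K ih => rw [Finset.sum_range_succ, ih, Nat.choose_succ_succ (K + 1), add_comm]

lemma eq_one_div_of_choose_mul_eq_sum {K n : ℕ} (hn : n ≤ K) {m : ℝ}
    (h : K.choose n * m = ∑ j ∈ Finset.range (K + 1), (j.choose n : ℝ) * (1 / (K + 1))) :
    m = 1 / (n + 1) := by
  have hpascal : ((K : ℝ) + 1) * K.choose n = (K + 1).choose (n + 1) * ((n : ℝ) + 1) := by
    exact_mod_cast Nat.add_one_mul_choose_eq K n
  rw [← Finset.sum_mul, ← Nat.cast_sum, Nat.sum_range_choose_eq_choose_succ] at h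
  have hK : (K + 1 : ℝ) ≠ 0 := by positivity
  have hC : (K.choose n : ℝ) ≠ 0 := by exact_mod_cast (Nat.choose_pos hn).ne'
  field_simp at h ⊢
  exact mul_left_cancel₀ (mul_ne_zero hC hK) (by linear_combination (n + 1 : ℝ) * h - hpascal)

-- `#(belowLast X ω)` is the rank statistic `A_K`.
noncomputable def belowLast {Ω : Type*} {K : ℕ} (X : Fin (K + 1) → Ω → ℝ) (ω : Ω) :
    Finset (Fin K) :=
  Finset.univ.filter fun i => X i.castSucc ω < X (Fin.last K) ω

section Rank

variable {Ω : Type*} {K : ℕ} {X : Fin (K + 1) → Ω → ℝ}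

lemma card_belowLast_le (ω : Ω) : (belowLast X ω).card ≤ K :=
  (belowLast X ω).card_le_univ.trans_eq (Fintype.card_fin K)

lemma setOf_subset_belowLast (S : Finset (Fin K)) :
    {ω | S ⊆ belowLast X ω}
      = {ω | ∀ i ∈ S.map Fin.castSuccEmb, X i ω < X (Fin.last K) ω} := by
  ext ω
  simp [belowLast, Finset.subset_iff]

variable [MeasurableSpace Ω] {P : Measure Ω}

lemma measurable_card_belowLast (hmeas : ∀ i, Measurable (X i)) :
    Measurable fun ω => (belowLast X ω).card := by
  simp only [belowLast, Finset.card_filter]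
  exact Finset.measurable_sum _ fun i _ =>
    Measurable.ite (measurableSet_lt (hmeas _) (hmeas _)) measurable_const measurable_const

lemma measurableSet_subset_belowLast (hmeas : ∀ i, Measurable (X i)) (S : Finset (Fin K)) :
    MeasurableSet {ω | S ⊆ belowLast X ω} := by
  rw [setOf_subset_belowLast]
  measurability

lemma lintegral_choose_card_belowLast [IsFiniteMeasure P] (hmeas : ∀ i, Measurable (X i))
    (hindep : iIndepFun X P) {ν : Measure ℝ} (hlaw : ∀ i : Fin K, P.map (X i.castSucc) = ν)
    (n : ℕ) :
    ∫⁻ ω, ((belowLast X ω).card.choose n : ℝ≥0∞) ∂P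
      = K.choose n * ∫⁻ y, ν (Iio y) ^ n ∂(P.map (X (Fin.last K))) := by
  have hmoment : ∀ S ∈ Finset.powersetCard n Finset.univ,
      P {ω | S ⊆ belowLast X ω} = ∫⁻ y, ν (Iio y) ^ n ∂(P.map (X (Fin.last K))) := by
    intro S hS
    rw [setOf_subset_belowLast, hindep.measure_forall_lt_eq_lintegral_pow hmeas (by simp),
      Finset.card_map, (Finset.mem_powersetCard.1 hS).2]
    intro i hi
    obtain ⟨j, -, rfl⟩ := Finset.mem_map.1 hi
    exact hlaw j
  rw [lintegral_choose_card_eq_sum_measure (measurableSet_subset_belowLast hmeas),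
    Finset.sum_congr rfl hmoment, Finset.sum_const, Finset.card_powersetCard,
    Finset.card_univ, Fintype.card_fin, nsmul_eq_mul]

end Rank

theorem uniform_rank_implies_moment_conditions_general
    {Ω : Type*} [MeasurableSpace Ω] (P : Measure Ω) [IsProbabilityMeasure P]
    (μ ν : Measure ℝ) [IsProbabilityMeasure ν]
    (hcont : Continuous (cdf ν))
    (K : ℕ) (X : Fin (K + 1) → Ω → ℝ)
    (hmeas : ∀ i, Measurable (X i))
    (hindep : iIndepFun X P)
    (hlawν : ∀ i : Fin K, Measure.map (X i.castSucc) P = ν)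
    (hlawμ : Measure.map (X (Fin.last K)) P = μ)
    (huniform : ∀ n : ℕ, n ≤ K →
      P {ω | (Finset.univ.filter
          (fun i : Fin K => X i.castSucc ω < X (Fin.last K) ω)).card = n}
        = 1 / (K + 1)) :
    ∀ n : ℕ, n ≤ K → ∫ y, (cdf ν y) ^ n ∂μ = 1 / (n + 1) := by
  intro n hn
  have hexp : K.choose n * ∫⁻ y, ν (Iio y) ^ n ∂μ
      = ∑ j ∈ Finset.range (K + 1), (j.choose n : ℝ≥0∞) * (1 / (K + 1)) := by
    rw [← hlawμ, ← lintegral_choose_card_belowLast hmeas hindep hlawν,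
      lintegral_comp_eq_sum_of_le (measurable_card_belowLast hmeas) card_belowLast_le
        fun j => (j.choose n : ℝ≥0∞)]
    exact Finset.sum_congr rfl fun j hj =>
      congrArg _ (huniform j (Nat.lt_succ_iff.1 (Finset.mem_range.1 hj)))
  have hreal := congrArg ENNReal.toReal hexp
  rw [ENNReal.toReal_sum fun j _ => by finiteness] at hreal
  rw [integral_cdf_pow_eq_toReal_lintegral hcont]
  exact eq_one_div_of_choose_mul_eq_sum hn (by simpa [ENNReal.toReal_add] using hreal)

/-- If the rank statistic `A_K` of an independent sample `y ~ μ` (density `p`) among `K` i.i.d.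
samples from `ν` (density `p̃`, continuous cdf `F̃`) is uniform on `{0, …, K}`, then
`∫ F̃(y)^n dμ(y) = 1/(n+1)` for all `n ∈ {0, …, K}`. -/
theorem uniform_rank_implies_moment_conditions
    {Ω : Type*} [MeasurableSpace Ω] (P : Measure Ω) [IsProbabilityMeasure P]
    (μ ν : Measure ℝ) [IsProbabilityMeasure μ] [IsProbabilityMeasure ν]
    (hcont : Continuous (cdf ν))
    (K : ℕ) (X : Fin (K + 1) → Ω → ℝ)
    (hmeas : ∀ i, Measurable (X i))
    (hindep : iIndepFun X P)
    (hlawν : ∀ i : Fin K, Measure.map (X i.castSucc) P = ν)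
    (hlawμ : Measure.map (X (Fin.last K)) P = μ)
    (huniform : ∀ n : ℕ, n ≤ K →
      P {ω | (Finset.univ.filter
          (fun i : Fin K => X i.castSucc ω < X (Fin.last K) ω)).card = n}
        = 1 / (K + 1)) :
    ∀ n : ℕ, n ≤ K → ∫ y, (cdf ν y) ^ n ∂μ = 1 / (n + 1) :=
  uniform_rank_implies_moment_conditions_general P μ ν hcont K X hmeas hindep hlawν hlawμ huniform
end

section
/- Let μ be a probability measure on [0,1] and for each K let X_K be the mixed binomial variable P(X_K = n) = ∫₀¹ C(K,n) qⁿ(1−q)^{K−n} dμ(q). If X_K is uniform on {0,…,K} for every K ∈ ℕ, then μ is the Lebesgue (uniform) measure on [0,1]. -/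
open MeasureTheory Set

/-!
Taking `n = K` in the hypothesis gives `∫ qᴷ dμ = 1/(K+1)`, which are the moments of the
uniform measure on `[0,1]`. Two finite measures concentrated on a compact interval with the same
moments integrate every polynomial alike, hence, by Weierstrass approximation, every bounded
continuous function alike, and such integrals determine a finite Borel measure.
-/

namespace MeasureTheory

section MomentsOnInterval

variable {μ ν : Measure ℝ} {a b : ℝ}

theorem integrable_of_continuous_of_ae_mem_Icc [IsFiniteMeasure μ] {f : ℝ → ℝ}
    (hf : Continuous f) (hμ : ∀ᵐ x ∂μ, x ∈ Icc a b) : Integrable f μ := by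
  rw [← Measure.restrict_eq_self_of_ae_mem hμ]
  exact hf.integrableOn_Icc

theorem integral_eval_eq_of_moments_eq [IsFiniteMeasure μ] [IsFiniteMeasure ν]
    (hμ : ∀ᵐ x ∂μ, x ∈ Icc a b) (hν : ∀ᵐ x ∂ν, x ∈ Icc a b)
    (hmom : ∀ n : ℕ, ∫ x, x ^ n ∂μ = ∫ x, x ^ n ∂ν) (p : Polynomial ℝ) :
    ∫ x, p.eval x ∂μ = ∫ x, p.eval x ∂ν := by
  induction p using Polynomial.induction_on' with
  | add p q hp hq =>
    simp only [Polynomial.eval_add]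
    rw [integral_add, integral_add, hp, hq]
    all_goals exact integrable_of_continuous_of_ae_mem_Icc (Polynomial.continuous _) ‹_›
  | monomial n c =>
    simp only [Polynomial.eval_monomial]
    rw [integral_const_mul, integral_const_mul, hmom]

theorem dist_integral_le_of_forall_mem_Icc_dist_le [IsFiniteMeasure μ] {f g : ℝ → ℝ} {ε : ℝ}
    (hf : Continuous f) (hg : Continuous g) (hμ : ∀ᵐ x ∂μ, x ∈ Icc a b)
    (hfg : ∀ x ∈ Icc a b, dist (f x) (g x) ≤ ε) :
    dist (∫ x, f x ∂μ) (∫ x, g x ∂μ) ≤ ε * μ.real univ := by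
  rw [dist_eq_norm, ← integral_sub (integrable_of_continuous_of_ae_mem_Icc hf hμ)
    (integrable_of_continuous_of_ae_mem_Icc hg hμ)]
  refine norm_integral_le_of_norm_le_const ?_
  filter_upwards [hμ] with x hx
  exact hfg x hx

theorem Measure.ext_of_moments_eq_of_ae_mem_Icc [IsFiniteMeasure μ] [IsFiniteMeasure ν]
    (hμ : ∀ᵐ x ∂μ, x ∈ Icc a b) (hν : ∀ᵐ x ∂ν, x ∈ Icc a b)
    (hmom : ∀ n : ℕ, ∫ x, x ^ n ∂μ = ∫ x, x ^ n ∂ν) : μ = ν := by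
  refine ext_of_forall_integral_eq_of_IsFiniteMeasure fun f => eq_of_forall_dist_le fun ε hε => ?_
  set C := μ.real univ + ν.real univ + 1
  have hC : 0 < C := by positivity
  obtain ⟨p, hp⟩ := exists_polynomial_near_of_continuousOn a b f f.continuous.continuousOn
    (ε / C) (div_pos hε hC)
  have hfp : ∀ x ∈ Icc a b, dist (f x) (p.eval x) ≤ ε / C := fun x hx => by
    rw [dist_comm, Real.dist_eq]
    exact (hp x hx).le
  calc dist (∫ x, f x ∂μ) (∫ x, f x ∂ν)
      ≤ dist (∫ x, f x ∂μ) (∫ x, p.eval x ∂μ) + dist (∫ x, f x ∂ν) (∫ x, p.eval x ∂ν) := by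
        rw [integral_eval_eq_of_moments_eq hμ hν hmom p, dist_comm (∫ x, f x ∂ν)]
        exact dist_triangle _ _ _
    _ ≤ ε / C * μ.real univ + ε / C * ν.real univ := by
        gcongr <;> exact dist_integral_le_of_forall_mem_Icc_dist_le f.continuous
          p.continuous ‹_› hfp
    _ ≤ ε := by
        rw [← mul_add, div_mul_eq_mul_div, div_le_iff₀ hC]
        gcongr
        linarith

end MomentsOnInterval

theorem integral_pow_restrict_Icc_zero_one (n : ℕ) :
    ∫ x in Icc (0 : ℝ) 1, x ^ n = 1 / (n + 1) := by
  rw [integral_Icc_eq_integral_Ioc, ← intervalIntegral.integral_of_le zero_le_one, integral_pow]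
  simp

end MeasureTheory

/-- **De Finetti / Hausdorff moment argument.** Let `μ` be a probability measure on `ℝ`
supported on `[0,1]`, and for each `K` let `X_K` be the mixed binomial with
`P(X_K = n) = ∫₀¹ C(K,n) q^n (1-q)^(K-n) dμ(q)`.  If `X_K` is uniform on `{0, …, K}` for
every `K`, then `μ` is the Lebesgue (uniform) measure on `[0,1]`. -/
theorem mixed_binomial_uniform_all_K
    (μ : Measure ℝ) [IsProbabilityMeasure μ] (hsupp : μ (Icc (0 : ℝ) 1) = 1)
    (huniform : ∀ K : ℕ, ∀ n : ℕ, n ≤ K →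
      (∫ q, (K.choose n : ℝ) * q ^ n * (1 - q) ^ (K - n) ∂μ) = 1 / (K + 1)) :
    μ = volume.restrict (Icc (0 : ℝ) 1) := by
  have hμ : ∀ᵐ x ∂μ, x ∈ Icc (0 : ℝ) 1 := by
    rw [ae_mem_iff_measure_eq measurableSet_Icc.nullMeasurableSet, hsupp, measure_univ]
  refine Measure.ext_of_moments_eq_of_ae_mem_Icc hμ (ae_restrict_mem measurableSet_Icc)
    fun n => ?_
  simpa [integral_pow_restrict_Icc_zero_one] using huniform n n le_rfl
end

section
/- If the mixed binomial distribution P(X_K = n) = ∫₀¹ C(K,n) qⁿ(1−q)^{K−n} dμ(q) is uniform on {0,…,K} for a fixed K, then ∫₀¹ qⁿ dμ(q) = 1/(n+1) for all n ∈ {0,…,K}. -/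
/-!
Writing `q ^ n = q ^ n * (q + (1 - q)) ^ (K - n)` and expanding binomially, the identity
`C(K, k) C(k, n) = C(K, n) C(K - n, k - n)` expresses `C(K, n) q ^ n` in the Bernstein basis as
`∑_{k = n}^{K} C(k, n) b_{K,k}(q)`. Integrating against `μ`, every Bernstein integral is `1/(K+1)`,
and the hockey-stick identity `∑_{k = n}^{K} C(k, n) = C(K + 1, n + 1) = (K + 1)/(n + 1) C(K, n)`
leaves `∫ q ^ n dμ = 1/(n + 1)`.
-/

open MeasureTheory Set Finset Polynomial

theorem bernsteinPolynomial.sum_choose_mul {R : Type*} [CommRing R] {n K : ℕ} (h : n ≤ K) :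
    ∑ k ∈ Finset.Icc n K, (k.choose n : R[X]) * bernsteinPolynomial R K k =
      (K.choose n : R[X]) * X ^ n := by
  rw [← Finset.Ico_add_one_right_eq_Icc, sum_Ico_eq_sum_range, Nat.sub_add_comm h]
  calc ∑ i ∈ range (K - n + 1), ((n + i).choose n : R[X]) * bernsteinPolynomial R K (n + i)
      = ∑ i ∈ range (K - n + 1),
          (K.choose n : R[X]) * X ^ n *
            ((X : R[X]) ^ i * (1 - X) ^ (K - n - i) * ((K - n).choose i : R[X])) := by
        refine sum_congr rfl fun i hi => ?_
        have hi : i ≤ K - n := Nat.lt_succ_iff.mp (mem_range.mp hi)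
        have hchoose :
            (K.choose (n + i) * (n + i).choose n : R[X]) = K.choose n * (K - n).choose i := by
          have := Nat.choose_mul (n := K) (k := n + i) (s := n) (by omega)
          rw [Nat.add_sub_cancel_left] at this
          rw [← Nat.cast_mul, ← Nat.cast_mul, this]
        rw [bernsteinPolynomial, show K - (n + i) = K - n - i by omega, pow_add]
        linear_combination (X ^ n * X ^ i * (1 - X) ^ (K - n - i)) * hchoose
    _ = (K.choose n : R[X]) * X ^ n * ((X : R[X]) + (1 - X)) ^ (K - n) := by rw [add_pow, mul_sum]
    _ = (K.choose n : R[X]) * X ^ n := by simp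

theorem Continuous.integrable_of_ae_mem_Icc {μ : Measure ℝ} [IsFiniteMeasureOnCompacts μ]
    {a b : ℝ} (hμ : ∀ᵐ x ∂μ, x ∈ Icc a b) {f : ℝ → ℝ} (hf : Continuous f) : Integrable f μ := by
  rw [← Measure.restrict_eq_self_of_ae_mem hμ]
  exact hf.continuousOn.integrableOn_compact isCompact_Icc

theorem choose_mul_integral_pow_eq_sum {μ : Measure ℝ} {n K : ℕ}
    (hint : ∀ k, Integrable (fun q => (bernsteinPolynomial ℝ K k).eval q) μ) (h : n ≤ K) :
    K.choose n * ∫ q, q ^ n ∂μ =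
      ∑ k ∈ Finset.Icc n K, k.choose n * ∫ q, (bernsteinPolynomial ℝ K k).eval q ∂μ := by
  calc K.choose n * ∫ q, q ^ n ∂μ
      = ∫ q, (∑ k ∈ Finset.Icc n K,
          (k.choose n : ℝ[X]) * bernsteinPolynomial ℝ K k).eval q ∂μ := by
        rw [← integral_const_mul, bernsteinPolynomial.sum_choose_mul h]
        simp
    _ = ∑ k ∈ Finset.Icc n K, ∫ q, k.choose n * (bernsteinPolynomial ℝ K k).eval q ∂μ := by
        simp only [eval_finsetSum, eval_mul, eval_natCast]
        exact integral_finsetSum _ fun k _ => (hint k).const_mul _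
    _ = _ := by simp only [integral_const_mul]

/-- If, for a fixed `K`, the mixed binomial distribution
`P(X_K = n) = ∫₀¹ C(K,n) q^n (1-q)^(K-n) dμ(q)` is uniform on `{0, …, K}`, then
`∫₀¹ q^n dμ(q) = 1/(n+1)` for all `n ∈ {0, …, K}`. -/
theorem mixed_binomial_uniform_implies_moments
    (μ : Measure ℝ) [IsProbabilityMeasure μ] (hsupp : μ (Icc (0 : ℝ) 1) = 1)
    (K : ℕ)
    (huniform : ∀ n : ℕ, n ≤ K →
      (∫ q, (K.choose n : ℝ) * q ^ n * (1 - q) ^ (K - n) ∂μ) = 1 / (K + 1)) :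
    ∀ n : ℕ, n ≤ K → (∫ q, q ^ n ∂μ) = 1 / (n + 1) := by
  intro n hn
  have hμ : ∀ᵐ q ∂μ, q ∈ Icc (0 : ℝ) 1 := by
    rw [ae_mem_iff_measure_eq measurableSet_Icc.nullMeasurableSet, hsupp, measure_univ]
  have hbern : ∀ k ∈ Finset.Icc n K, ∫ q, (bernsteinPolynomial ℝ K k).eval q ∂μ = 1 / (K + 1) :=
    fun k hk => by simpa [bernsteinPolynomial] using huniform k (Finset.mem_Icc.1 hk).2
  have key := choose_mul_integral_pow_eq_sum
    (fun k => (bernsteinPolynomial ℝ K k).continuous.integrable_of_ae_mem_Icc hμ) hn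
  rw [Finset.sum_congr rfl fun k hk => by rw [hbern k hk], ← Finset.sum_mul, ← Nat.cast_sum,
    Nat.sum_Icc_choose] at key
  have hpascal : ((K + 1) * K.choose n : ℝ) = (K + 1).choose (n + 1) * (n + 1) := by
    exact_mod_cast Nat.add_one_mul_choose_eq K n
  have hchoose : (K.choose n : ℝ) ≠ 0 := by exact_mod_cast (Nat.choose_pos hn).ne'
  field_simp at key ⊢
  refine mul_left_cancel₀ (mul_ne_zero (by positivity : (K + 1 : ℝ) ≠ 0) hchoose) ?_
  linear_combination (n + 1 : ℝ) * key - hpascal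
end
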